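/- For every integer s ≥ 1, the function α_s : [0,1] → [0,1] defined by α_s(p) = p·(2((1+p)/2)^{s−1} − p^{s−1}) / (2((1+p)/2)^s − p^s) is a bijection from [0,1] to itself with a continuous inverse; in particular α_s is continuous and strictly increasing on [0,1], with α_s(0) = 0 and α_s(1) = 1. -/

import Mathlib

open Filter

/-- `t_{K_s}(p) = -(1/s) log (2((1+p)/2)^s - p^s)`. -/
noncomputable def cliqueThreshold (p : ℝ) (s : ℕ) : ℝ :=
  -(1 / s) * Real.log (2 * ((1 + p) / 2) ^ s - p ^ s)

/-- `α_s(p) = p (2((1+p)/2)^(s-1) - p^(s-1)) / (2((1+p)/2)^s - p^s)`. -/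
noncomputable def alphaS (p : ℝ) (s : ℕ) : ℝ :=
  p * (2 * ((1 + p) / 2) ^ (s - 1) - p ^ (s - 1)) /
    (2 * ((1 + p) / 2) ^ s - p ^ s)

/-- AM–GM type key inequality: `(m+1) t^m ≤ 1 + m t^(m+1)` on `[0,1]`. -/
lemma key_ineq (m : ℕ) {t : ℝ} (h0 : 0 ≤ t) (h1 : t ≤ 1) :
    ((m : ℝ) + 1) * t ^ m ≤ 1 + (m : ℝ) * t ^ (m + 1) := by
  induction m with
  | zero => simp
  | succ n ih =>
    have htn : t ^ (n + 1) ≤ 1 := pow_le_one₀ h0 h1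
    have h2 : (1 - t) * (1 - t ^ (n + 1)) ≥ 0 :=
      mul_nonneg (by linarith) (by linarith)
    have h3 : t * (((n : ℝ) + 1) * t ^ n) ≤ t * (1 + (n : ℝ) * t ^ (n + 1)) :=
      mul_le_mul_of_nonneg_left ih h0
    have htn1 : t ^ (n + 1) = t * t ^ n := by ring
    have htn2 : t ^ (n + 2) = t * t ^ (n + 1) := by ring
    push_cast
    nlinarith [pow_nonneg h0 n, pow_nonneg h0 (n + 1)]

/-- The auxiliary function `F t = (2t - t^(m+1)) / (2 - t^(m+1))`. -/
noncomputable def auxF (m : ℕ) (t : ℝ) : ℝ := (2 * t - t ^ (m + 1)) / (2 - t ^ (m + 1))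

lemma auxF_denom_pos (m : ℕ) {t : ℝ} (h0 : 0 ≤ t) (h1 : t ≤ 1) :
    0 < 2 - t ^ (m + 1) := by
  have := pow_le_one₀ h0 h1 (n := m + 1)
  linarith

lemma auxF_hasDerivAt (m : ℕ) {t : ℝ} (h0 : 0 ≤ t) (h1 : t ≤ 1) :
    HasDerivAt (auxF m)
      (((2 - ((m : ℝ) + 1) * t ^ m) * (2 - t ^ (m + 1)) -
        (2 * t - t ^ (m + 1)) * -(((m : ℝ) + 1) * t ^ m)) / (2 - t ^ (m + 1)) ^ 2) t := by
  have hv : 2 - t ^ (m + 1) ≠ 0 := (auxF_denom_pos m h0 h1).ne'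
  have hp : HasDerivAt (fun t : ℝ => t ^ (m + 1)) (((m : ℝ) + 1) * t ^ m) t := by
    simpa using hasDerivAt_pow (m + 1) t
  have hu : HasDerivAt (fun t : ℝ => 2 * t - t ^ (m + 1)) (2 - ((m : ℝ) + 1) * t ^ m) t := by
    simpa using ((hasDerivAt_id t).const_mul 2).fun_sub hp
  have hw : HasDerivAt (fun t : ℝ => 2 - t ^ (m + 1)) (-(((m : ℝ) + 1) * t ^ m)) t := by
    simpa using (hasDerivAt_const t 2).fun_sub hp
  exact hu.div hw hv

lemma auxF_deriv_pos (m : ℕ) {t : ℝ} (h0 : 0 ≤ t) (h1 : t ≤ 1) :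
    0 < ((2 - ((m : ℝ) + 1) * t ^ m) * (2 - t ^ (m + 1)) -
        (2 * t - t ^ (m + 1)) * -(((m : ℝ) + 1) * t ^ m)) / (2 - t ^ (m + 1)) ^ 2 := by
  have hd := auxF_denom_pos m h0 h1
  have hk := key_ineq m h0 h1
  apply div_pos _ (by positivity)
  have hexp : (2 - ((m : ℝ) + 1) * t ^ m) * (2 - t ^ (m + 1)) -
      (2 * t - t ^ (m + 1)) * -(((m : ℝ) + 1) * t ^ m)
      = 2 * (2 - (((m : ℝ) + 1) * t ^ m - (m : ℝ) * t ^ (m + 1))) := by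
    have : t ^ (m + 1) = t * t ^ m := by ring
    ring
  rw [hexp]
  linarith

lemma auxF_continuousOn (m : ℕ) : ContinuousOn (auxF m) (Set.Icc (0 : ℝ) 1) := by
  apply ContinuousOn.div (by fun_prop) (by fun_prop)
  intro t ht
  exact (auxF_denom_pos m ht.1 ht.2).ne'

lemma auxF_strictMonoOn (m : ℕ) : StrictMonoOn (auxF m) (Set.Icc (0 : ℝ) 1) := by
  apply strictMonoOn_of_deriv_pos (convex_Icc 0 1) (auxF_continuousOn m)
  intro t ht
  rw [interior_Icc] at ht
  rw [(auxF_hasDerivAt m ht.1.le ht.2.le).deriv]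
  exact auxF_deriv_pos m ht.1.le ht.2.le

/-- The Möbius change of variables `T p = 2p/(1+p)`. -/
noncomputable def auxT (p : ℝ) : ℝ := 2 * p / (1 + p)

lemma auxT_mapsTo {p : ℝ} (h0 : 0 ≤ p) (h1 : p ≤ 1) : auxT p ∈ Set.Icc (0 : ℝ) 1 := by
  have h1p : (0 : ℝ) < 1 + p := by linarith
  rw [auxT]
  constructor
  · exact div_nonneg (by linarith) h1p.le
  · rw [div_le_one h1p]; linarith

lemma auxT_strictMonoOn : StrictMonoOn auxT (Set.Icc (0 : ℝ) 1) := by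
  intro x hx y hy hxy
  have hx1 : (0 : ℝ) < 1 + x := by linarith [hx.1]
  have hy1 : (0 : ℝ) < 1 + y := by linarith [hy.1]
  rw [auxT, auxT, div_lt_div_iff₀ hx1 hy1]
  nlinarith

lemma alphaS_eq (m : ℕ) {p : ℝ} (h0 : 0 ≤ p) (h1 : p ≤ 1) :
    alphaS p (m + 1) = auxF m (auxT p) := by
  have h1p : (1 : ℝ) + p ≠ 0 := by positivity
  have ha : (0 : ℝ) < (1 + p) / 2 := by linarith
  have hpa : p ≤ (1 + p) / 2 := by linarith
  have hD1 : 0 < 2 * ((1 + p) / 2) ^ (m + 1) - p ^ (m + 1) := by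
    have := pow_le_pow_left₀ h0 hpa (m + 1)
    have := pow_pos ha (m + 1)
    linarith
  have ht := auxT_mapsTo h0 h1
  have hD2 : 0 < 2 - auxT p ^ (m + 1) := auxF_denom_pos m ht.1 ht.2
  rw [alphaS, auxF, auxT] at *
  rw [div_eq_div_iff hD1.ne' hD2.ne']
  simp only [Nat.add_sub_cancel, div_pow]
  field_simp
  ring

lemma alphaS_strictMonoOn (m : ℕ) :
    StrictMonoOn (fun p => alphaS p (m + 1)) (Set.Icc (0 : ℝ) 1) := by
  intro x hx y hy hxy
  simp only
  rw [alphaS_eq m hx.1 hx.2, alphaS_eq m hy.1 hy.2]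
  exact auxF_strictMonoOn m (auxT_mapsTo hx.1 hx.2) (auxT_mapsTo hy.1 hy.2)
    (auxT_strictMonoOn hx hy hxy)

lemma alphaS_continuousOn (m : ℕ) :
    ContinuousOn (fun p => alphaS p (m + 1)) (Set.Icc (0 : ℝ) 1) := by
  unfold alphaS
  apply ContinuousOn.div (by fun_prop) (by fun_prop)
  intro p hp
  have h0 := hp.1; have h1 := hp.2
  have ha : (0 : ℝ) < (1 + p) / 2 := by linarith
  have hpa : p ≤ (1 + p) / 2 := by linarith
  have := pow_le_pow_left₀ h0 hpa (m + 1)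
  have := pow_pos ha (m + 1)
  intro h
  linarith [h.ge]

lemma alphaS_zero (s : ℕ) : alphaS 0 s = 0 := by simp [alphaS]

lemma alphaS_one (s : ℕ) (hs : 1 ≤ s) : alphaS 1 s = 1 := by
  obtain ⟨m, rfl⟩ : ∃ m, s = m + 1 := ⟨s - 1, (Nat.succ_pred_eq_of_pos hs).symm⟩
  norm_num [alphaS]

/-- **Proposition (`α_s` is a self-homeomorphism of `[0,1]`).** For every integer
`s ≥ 1`, `p ↦ α_s(p)` maps `[0,1]` bijectively onto itself, is continuous and
strictly increasing there, has a continuous inverse, and fixes `0` and `1`. -/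
theorem alphaS_bijection (s : ℕ) (hs : 1 ≤ s) :
    Set.BijOn (fun p => alphaS p s) (Set.Icc (0 : ℝ) 1) (Set.Icc (0 : ℝ) 1) ∧
    ContinuousOn (fun p => alphaS p s) (Set.Icc (0 : ℝ) 1) ∧
    StrictMonoOn (fun p => alphaS p s) (Set.Icc (0 : ℝ) 1) ∧
    alphaS 0 s = 0 ∧ alphaS 1 s = 1 ∧
    ∃ g : ℝ → ℝ, ContinuousOn g (Set.Icc (0 : ℝ) 1) ∧
      (∀ p ∈ Set.Icc (0 : ℝ) 1, g (alphaS p s) = p) ∧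
      (∀ y ∈ Set.Icc (0 : ℝ) 1, alphaS (g y) s = y) := by
  obtain ⟨m, rfl⟩ : ∃ m, s = m + 1 := ⟨s - 1, (Nat.succ_pred_eq_of_pos hs).symm⟩
  set f : ℝ → ℝ := fun p => alphaS p (m + 1) with hf
  have hmono : StrictMonoOn f (Set.Icc (0 : ℝ) 1) := alphaS_strictMonoOn m
  have hcont : ContinuousOn f (Set.Icc (0 : ℝ) 1) := alphaS_continuousOn m
  have hf0 : f 0 = 0 := alphaS_zero (m + 1)
  have hf1 : f 1 = 1 := alphaS_one (m + 1) (by omega)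
  have hmapsTo : Set.MapsTo f (Set.Icc (0 : ℝ) 1) (Set.Icc (0 : ℝ) 1) := by
    intro p hp
    constructor
    · rw [← hf0]
      exact hmono.monotoneOn (Set.left_mem_Icc.2 one_pos.le) hp hp.1
    · rw [← hf1]
      exact hmono.monotoneOn hp (Set.right_mem_Icc.2 one_pos.le) hp.2
  have hsurj : Set.SurjOn f (Set.Icc (0 : ℝ) 1) (Set.Icc (0 : ℝ) 1) := by
    have := intermediate_value_Icc (zero_le_one) hcont
    rw [hf0, hf1] at this
    exact this
  have hbij : Set.BijOn f (Set.Icc (0 : ℝ) 1) (Set.Icc (0 : ℝ) 1) :=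
    ⟨hmapsTo, hmono.injOn, hsurj⟩
  refine ⟨hbij, hcont, hmono, hf0, hf1, ?_⟩
  -- the continuous inverse, via compactness
  haveI : CompactSpace (Set.Icc (0 : ℝ) 1) := isCompact_iff_compactSpace.mp isCompact_Icc
  have hcont' : Continuous (hbij.equiv f : Set.Icc (0 : ℝ) 1 → Set.Icc (0 : ℝ) 1) := by
    rw [continuous_induced_rng]
    exact hcont.restrict
  let h := Continuous.homeoOfEquivCompactToT2 hcont'
  refine ⟨fun y => if hy : y ∈ Set.Icc (0 : ℝ) 1 then (h.symm ⟨y, hy⟩ : ℝ) else y, ?_, ?_, ?_⟩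
  · rw [continuousOn_iff_continuous_restrict]
    have : Set.domRestrict (Set.Icc (0 : ℝ) 1)
        (fun y => if hy : y ∈ Set.Icc (0 : ℝ) 1 then (h.symm ⟨y, hy⟩ : ℝ) else y)
        = fun y => (h.symm y : ℝ) := by
      funext y
      simp only [Set.domRestrict_apply, dif_pos y.2]
    rw [this]
    exact continuous_subtype_val.comp h.symm.continuous
  · intro p hp
    have hfp : f p ∈ Set.Icc (0 : ℝ) 1 := hmapsTo hp
    simp only [dif_pos (show alphaS p (m + 1) ∈ Set.Icc (0 : ℝ) 1 from hfp)]
    have : h ⟨p, hp⟩ = ⟨f p, hfp⟩ := rfl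
    rw [← this, Homeomorph.symm_apply_apply]
  · intro y hy
    simp only [dif_pos hy]
    have : h (h.symm ⟨y, hy⟩) = ⟨y, hy⟩ := h.apply_symm_apply _
    have h2 : f ((h.symm ⟨y, hy⟩ : ℝ)) = y := congrArg Subtype.val this
    exact h2
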